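/- Let G be a connected chordal graph with Diam(G) ≤ 3 containing two disjoint cliques W₁ and W₂ each of which dominates G. Then the graph G′ obtained by adding for each i a vertex wᵢ adjacent to all of Wᵢ and a further vertex wᵢ′ adjacent only to wᵢ is chordal, has Rad(G′) = 3 and Diam(G′) = 5, and its center is exactly V(G). -/

import Mathlib

open SimpleGraph

variable {V : Type*}

noncomputable instance (priority := low) instFintypeSubsetOfFinite [Finite V] (s : Set V) :
    Fintype ↥s := Fintype.ofFinite _

/-- Eccentricity of a vertex: max distance to any vertex. -/
noncomputable def ecc [Fintype V] (G : SimpleGraph V) (x : V) : ℕ :=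
  Finset.univ.sup (G.dist x)

/-- Radius: minimum eccentricity. -/
noncomputable def grad [Fintype V] (G : SimpleGraph V) : ℕ :=
  sInf (Set.range (ecc G))

/-- Diameter: maximum eccentricity. -/
noncomputable def gdiam [Fintype V] (G : SimpleGraph V) : ℕ :=
  Finset.univ.sup (ecc G)

/-- The center: vertices of minimum eccentricity. -/
def center [Fintype V] (G : SimpleGraph V) : Set V :=
  {x | ecc G x = grad G}

/-- `G` has an induced cycle of length `n`. -/
def HasInducedCycle (G : SimpleGraph V) (n : ℕ) : Prop :=
  3 ≤ n ∧ ∃ f : ZMod n → V, Function.Injective f ∧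
    ∀ i j : ZMod n, G.Adj (f i) (f j) ↔ (i = j + 1 ∨ j = i + 1)

/-- `G` is `k`-chordal: no induced cycle of length greater than `k`. -/
def KChordal (G : SimpleGraph V) (k : ℕ) : Prop :=
  ∀ n, k < n → ¬ HasInducedCycle G n

/-- `G` together with `w₁, w₁', w₂, w₂'` (encoded as `0, 1, 2, 3`), where `wᵢ` is joined to
all of `Wᵢ` and to `wᵢ'`. -/
def addTwoPendCliques (G : SimpleGraph V) (W₁ W₂ : Set V) : SimpleGraph (V ⊕ Fin 4) :=
  SimpleGraph.fromRel (fun x y => match x, y with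
    | Sum.inl a, Sum.inl b => G.Adj a b
    | Sum.inr i, Sum.inl a => (i = 0 ∧ a ∈ W₁) ∨ (i = 2 ∧ a ∈ W₂)
    | Sum.inr i, Sum.inr j => (i = 0 ∧ j = 1) ∨ (i = 2 ∧ j = 3)
    | _, _ => False)


/-!
Every vertex of `G` is within distance 1 of the dominating clique `Wᵢ`, and `Wᵢ ∪ {wᵢ}` is a clique
of `G′` containing a neighbour of `wᵢ'`; routing through these cliques, a vertex of `G` is within
distance 3 of every vertex of `G′`, so `wᵢ` and `wᵢ'` have eccentricity at most 4 and 5. For the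
lower bounds, the distance `potential` from `w₁'` changes by at most 1 along each edge and equals 5
at `w₂'`, so every vertex `x` is at distance at least `potential x` from `w₁'` and at least
`5 - potential x` from `w₂'`; this is 3 on `V(G)`, 4 at `wᵢ` and 5 at `wᵢ'`.

A long induced cycle cannot pass through a vertex whose two cycle neighbours lie in a clique. This
excludes the pendant vertices `wᵢ'`, then the vertices `wᵢ`, whose remaining neighbours lie in the
clique `Wᵢ`; so the cycle lies in `G`, which has none.
-/

open Sum

lemma ZMod.natCast_ne_zero_of_lt {n k : ℕ} (hk : 0 < k) (hkn : k < n) : (k : ZMod n) ≠ 0 := by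
  rw [Ne, ZMod.natCast_eq_zero_iff]
  exact fun h => absurd (Nat.le_of_dvd hk h) (by omega)

section Eccentricity

variable [Fintype V] {G : SimpleGraph V}

lemma dist_le_ecc (x y : V) : G.dist x y ≤ ecc G x :=
  Finset.le_sup (Finset.mem_univ y)

lemma ecc_le_iff {x : V} {n : ℕ} : ecc G x ≤ n ↔ ∀ y, G.dist x y ≤ n := by
  simp [ecc, Finset.sup_le_iff]

lemma SimpleGraph.Adj.ecc_le_ecc_add_one (hG : G.Connected) {x y : V} (h : G.Adj x y) :
    ecc G x ≤ ecc G y + 1 := by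
  refine ecc_le_iff.2 fun z => ?_
  have hyz := dist_le_ecc (G := G) y z
  have hxy := dist_eq_one_iff_adj.2 h
  have := hG.dist_triangle (u := x) (v := y) (w := z)
  omega

lemma grad_eq_of_isLeast {r : ℕ} (h : IsLeast (Set.range (ecc G)) r) : grad G = r :=
  h.csInf_eq

lemma gdiam_eq_of_isGreatest {d : ℕ} (h : IsGreatest (Set.range (ecc G)) d) : gdiam G = d := by
  obtain ⟨⟨x, rfl⟩, hd⟩ := h
  exact le_antisymm (Finset.sup_le fun y _ => hd ⟨y, rfl⟩) (Finset.le_sup (Finset.mem_univ x))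

end Eccentricity

namespace SimpleGraph

variable {U : Type*} {G : SimpleGraph V} {H : SimpleGraph U}

lemma Walk.apply_le_apply_add_length {f : U → ℕ} (hf : ∀ x y, H.Adj x y → f x ≤ f y + 1)
    {x y : U} (p : H.Walk x y) : f x ≤ f y + p.length := by
  induction p with
  | nil => simp
  | cons hadj _ ih => rw [Walk.length_cons]; linarith [hf _ _ hadj]

lemma Reachable.apply_le_apply_add_dist {f : U → ℕ} (hf : ∀ x y, H.Adj x y → f x ≤ f y + 1)
    {x y : U} (h : H.Reachable x y) : f x ≤ f y + H.dist x y := by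
  obtain ⟨p, hp⟩ := h.exists_walk_length_eq_dist
  exact hp ▸ p.apply_le_apply_add_length hf

lemma Connected.dist_le_three_of_isClique (hH : H.Connected) {K : Set U} (hK : H.IsClique K)
    {u v a b : U} (ha : a ∈ K) (hb : b ∈ K) (hu : H.dist u a ≤ 1) (hv : H.dist b v ≤ 1) :
    H.dist u v ≤ 3 := by
  have hab : H.dist a b ≤ 1 := by
    rcases eq_or_ne a b with rfl | hne
    · simp
    · exact (dist_eq_one_iff_adj.2 (hK ha hb hne)).le
  calc H.dist u v ≤ H.dist u a + (H.dist a b + H.dist b v) :=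
        hH.dist_triangle.trans (Nat.add_le_add_left hH.dist_triangle _)
    _ ≤ 3 := by omega

lemma Embedding.isClique_image {s : Set V} (φ : G ↪g H) (hs : G.IsClique s) :
    H.IsClique (φ '' s) := by
  rintro _ ⟨a, ha, rfl⟩ _ ⟨b, hb, rfl⟩ hab
  exact φ.map_adj_iff.2 (hs ha hb (ne_of_apply_ne φ hab))

def IsDominatingClique (G : SimpleGraph V) (W : Set V) : Prop :=
  G.IsClique W ∧ ∀ v ∉ W, ∃ w ∈ W, G.Adj v w

lemma IsDominatingClique.nonempty [Nonempty V] {W : Set V} (hW : G.IsDominatingClique W) :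
    W.Nonempty := by
  obtain ⟨v⟩ := ‹Nonempty V›
  by_cases hv : v ∈ W
  · exact ⟨v, hv⟩
  · obtain ⟨w, hw, -⟩ := hW.2 v hv
    exact ⟨w, hw⟩

def IsInducedCycle (H : SimpleGraph U) (n : ℕ) (f : ZMod n → U) : Prop :=
  Function.Injective f ∧ ∀ i j : ZMod n, H.Adj (f i) (f j) ↔ (i = j + 1 ∨ j = i + 1)

lemma hasInducedCycle_iff {n : ℕ} : HasInducedCycle H n ↔ 3 ≤ n ∧ ∃ f, H.IsInducedCycle n f :=
  Iff.rfl

namespace IsInducedCycle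

variable {n : ℕ} {f : ZMod n → U}

lemma of_embedding {g : ZMod n → V} (φ : G ↪g H) (hf : H.IsInducedCycle n (φ ∘ g)) :
    G.IsInducedCycle n g :=
  ⟨hf.1.of_comp, fun i j => φ.map_adj_iff.symm.trans (hf.2 i j)⟩

/-- On a cycle of length at least 4 the two neighbours of a vertex are distinct and nonadjacent,
so they never lie in a common clique. -/
lemma apply_ne_of_isClique (hf : H.IsInducedCycle n f) (hn : 3 < n) {x : U} {K : Set U}
    (hK : H.IsClique K) (hx : ∀ j, H.Adj x (f j) → f j ∈ K) (i : ZMod n) : f i ≠ x := by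
  have h1 : (1 : ZMod n) ≠ 0 := by
    exact_mod_cast ZMod.natCast_ne_zero_of_lt (k := 1) (by omega) (by omega)
  have h2 : (2 : ZMod n) ≠ 0 := by
    exact_mod_cast ZMod.natCast_ne_zero_of_lt (k := 2) (by omega) (by omega)
  have h3 : (3 : ZMod n) ≠ 0 := by
    exact_mod_cast ZMod.natCast_ne_zero_of_lt (k := 3) (by omega) hn
  rintro rfl
  have hsucc := hx (i + 1) ((hf.2 _ _).2 (Or.inr rfl))
  have hpred := hx (i - 1) ((hf.2 _ _).2 (Or.inl (by ring)))
  have hne : f (i + 1) ≠ f (i - 1) := fun h => h2 (by linear_combination hf.1 h)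
  rcases (hf.2 _ _).1 (hK hsucc hpred hne) with h | h
  · exact h1 (by linear_combination h)
  · exact h3 (by linear_combination -h)

end IsInducedCycle

end SimpleGraph

section AddTwoPendCliques

variable {G : SimpleGraph V} {W₁ W₂ : Set V}

local notation "G′" => addTwoPendCliques G W₁ W₂

@[simp] lemma addTwoPendCliques_adj_inl_inl {a b : V} : G′.Adj (inl a) (inl b) ↔ G.Adj a b := by
  simpa [addTwoPendCliques, G.adj_comm b a] using fun h : G.Adj a b => h.ne

@[simp] lemma addTwoPendCliques_adj_inr_inl {i : Fin 4} {a : V} :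
    G′.Adj (inr i) (inl a) ↔ i = 0 ∧ a ∈ W₁ ∨ i = 2 ∧ a ∈ W₂ := by
  simp [addTwoPendCliques]

@[simp] lemma addTwoPendCliques_adj_inl_inr {i : Fin 4} {a : V} :
    G′.Adj (inl a) (inr i) ↔ i = 0 ∧ a ∈ W₁ ∨ i = 2 ∧ a ∈ W₂ := by
  rw [adj_comm, addTwoPendCliques_adj_inr_inl]

@[simp] lemma addTwoPendCliques_adj_inr_inr {i j : Fin 4} :
    G′.Adj (inr i) (inr j) ↔ s(i, j) = s(0, 1) ∨ s(i, j) = s(2, 3) := by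
  fin_cases i <;> fin_cases j <;> simp [addTwoPendCliques]

lemma addTwoPendCliques_adj_inr_zero {x : V ⊕ Fin 4} :
    G′.Adj (inr 0) x ↔ x = inr 1 ∨ x ∈ inl '' W₁ := by
  rcases x with a | j
  · simp
  · fin_cases j <;> simp

lemma addTwoPendCliques_adj_inr_one {x : V ⊕ Fin 4} : G′.Adj (inr 1) x ↔ x = inr 0 := by
  rcases x with a | j
  · simp
  · fin_cases j <;> simp

lemma addTwoPendCliques_adj_inr_two {x : V ⊕ Fin 4} :
    G′.Adj (inr 2) x ↔ x = inr 3 ∨ x ∈ inl '' W₂ := by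
  rcases x with a | j
  · simp
  · fin_cases j <;> simp

lemma addTwoPendCliques_adj_inr_three {x : V ⊕ Fin 4} : G′.Adj (inr 3) x ↔ x = inr 2 := by
  rcases x with a | j
  · simp
  · fin_cases j <;> simp

def inlEmbedding (G : SimpleGraph V) (W₁ W₂ : Set V) : G ↪g addTwoPendCliques G W₁ W₂ where
  toFun := inl
  inj' := inl_injective
  map_rel_iff' := addTwoPendCliques_adj_inl_inl

lemma isClique_image_inl {W : Set V} (hW : G.IsClique W) : G′.IsClique (inl '' W) :=
  (inlEmbedding G W₁ W₂).isClique_image hW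

lemma isClique_insert_inr_image_inl {i : Fin 4} {W : Set V} (hW : G.IsClique W)
    (hi : ∀ a ∈ W, G′.Adj (inr i) (inl a)) : G′.IsClique (insert (inr i) (inl '' W)) :=
  (isClique_image_inl hW).insert (by rintro _ ⟨a, ha, rfl⟩ -; exact hi a ha)

lemma SimpleGraph.Connected.addTwoPendCliques (hG : G.Connected) (hW₁ : W₁.Nonempty)
    (hW₂ : W₂.Nonempty) : G′.Connected := by
  obtain ⟨a₁, ha₁⟩ := hW₁
  obtain ⟨a₂, ha₂⟩ := hW₂
  have hV : ∀ v, G′.Reachable (inl a₁) (inl v) := fun v =>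
    (hG.preconnected a₁ v).map (inlEmbedding G W₁ W₂).toHom
  have h0 : G′.Adj (inl a₁) (inr 0) := by simp [ha₁]
  have h2 : G′.Adj (inl a₂) (inr 2) := by simp [ha₂]
  have h01 : G′.Adj (inr 0) (inr 1) := by simp
  have h23 : G′.Adj (inr 2) (inr 3) := by simp
  refine (connected_iff_exists_forall_reachable _).2 ⟨inl a₁, ?_⟩
  rintro (v | i)
  · exact hV v
  · fin_cases i
    · exact h0.reachable
    · exact h0.reachable.trans h01.reachable
    · exact (hV a₂).trans h2.reachable
    · exact ((hV a₂).trans h2.reachable).trans h23.reachable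

lemma SimpleGraph.IsInducedCycle.apply_mem_range_inl (h1 : G.IsClique W₁) (h2 : G.IsClique W₂)
    {n : ℕ} {f : ZMod n → V ⊕ Fin 4} (hf : G′.IsInducedCycle n f) (hn : 3 < n) (i : ZMod n) :
    f i ∈ Set.range inl := by
  have hf1 := hf.apply_ne_of_isClique hn (isClique_singleton (inr 0)) fun _ hj =>
    addTwoPendCliques_adj_inr_one.1 hj
  have hf3 := hf.apply_ne_of_isClique hn (isClique_singleton (inr 2)) fun _ hj =>
    addTwoPendCliques_adj_inr_three.1 hj
  have hf0 := hf.apply_ne_of_isClique hn (isClique_image_inl h1) fun j hj =>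
    (addTwoPendCliques_adj_inr_zero.1 hj).resolve_left (hf1 j)
  have hf2 := hf.apply_ne_of_isClique hn (isClique_image_inl h2) fun j hj =>
    (addTwoPendCliques_adj_inr_two.1 hj).resolve_left (hf3 j)
  rcases hfi : f i with a | k
  · exact ⟨a, rfl⟩
  · fin_cases k
    exacts [absurd hfi (hf0 i), absurd hfi (hf1 i), absurd hfi (hf2 i), absurd hfi (hf3 i)]

lemma kChordal_addTwoPendCliques (hch : KChordal G 3) (h1 : G.IsClique W₁)
    (h2 : G.IsClique W₂) : KChordal G′ 3 := by
  intro n hn hcyc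
  obtain ⟨h3, f, hf⟩ := hasInducedCycle_iff.1 hcyc
  choose g hg using hf.apply_mem_range_inl h1 h2 hn
  have hfg : f = inlEmbedding G W₁ W₂ ∘ g := funext fun i => (hg i).symm
  exact hch n hn (hasInducedCycle_iff.2 ⟨h3, g, (hfg ▸ hf).of_embedding _⟩)

lemma exists_mem_dist_inl_le_one {W : Set V} (hW : ∀ v ∉ W, ∃ w ∈ W, G.Adj v w) (v : V) :
    ∃ a ∈ W, G′.dist (inl v) (inl a) ≤ 1 := by
  by_cases hv : v ∈ W
  · exact ⟨v, hv, by simp⟩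
  · obtain ⟨w, hw, hvw⟩ := hW v hv
    exact ⟨w, hw, (dist_eq_one_iff_adj.2 (by simpa)).le⟩

open Classical in
/-- The distance from `w₁'` in `G′` when `W₁` and `W₂` are disjoint. -/
noncomputable def potential (W₁ : Set V) : V ⊕ Fin 4 → ℕ :=
  Sum.elim (fun a => if a ∈ W₁ then 2 else 3) ![1, 0, 4, 5]

lemma potential_le_add_one (hdisj : Disjoint W₁ W₂) :
    ∀ x y, G′.Adj x y → potential W₁ x ≤ potential W₁ y + 1 := by
  rintro (a | i) (b | j) h
  · simp only [potential, elim_inl]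
    split_ifs <;> omega
  · have : a ∈ W₂ → a ∉ W₁ := fun ha ha' => Set.disjoint_left.1 hdisj ha' ha
    fin_cases j <;> simp_all [potential]
  · have : b ∈ W₂ → b ∉ W₁ := fun hb hb' => Set.disjoint_left.1 hdisj hb' hb
    fin_cases i <;> simp_all [potential]
  · fin_cases i <;> fin_cases j <;> simp_all [potential]

variable [Fintype V]

lemma max_potential_le_ecc (hconn : G′.Connected) (hdisj : Disjoint W₁ W₂) (x : V ⊕ Fin 4) :
    max (potential W₁ x) (5 - potential W₁ x) ≤ ecc G′ x := by
  have hlip := potential_le_add_one (G := G) hdisj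
  have h1 := (hconn.preconnected x (inr 1)).apply_le_apply_add_dist hlip
  have h3 := (hconn.preconnected (inr 3) x).apply_le_apply_add_dist hlip
  rw [dist_comm] at h3
  have hx1 := dist_le_ecc (G := G′) x (inr 1)
  have hx3 := dist_le_ecc (G := G′) x (inr 3)
  have hp1 : potential W₁ (inr 1) = 0 := rfl
  have hp3 : potential W₁ (inr 3) = 5 := rfl
  omega

lemma ecc_inl_le (hconn : G′.Connected) (hW₁ : G.IsDominatingClique W₁)
    (hW₂ : G.IsDominatingClique W₂) (v : V) : ecc G′ (inl v) ≤ 3 := by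
  have hK₁ : G′.IsClique (insert (inr 0) (inl '' W₁)) :=
    isClique_insert_inr_image_inl hW₁.1 fun a ha => by simp [ha]
  have hK₂ : G′.IsClique (insert (inr 2) (inl '' W₂)) :=
    isClique_insert_inr_image_inl hW₂.1 fun a ha => by simp [ha]
  obtain ⟨a₁, ha₁, hva₁⟩ : ∃ a ∈ W₁, G′.dist (inl v) (inl a) ≤ 1 :=
    exists_mem_dist_inl_le_one hW₁.2 v
  obtain ⟨a₂, ha₂, hva₂⟩ : ∃ a ∈ W₂, G′.dist (inl v) (inl a) ≤ 1 :=
    exists_mem_dist_inl_le_one hW₂.2 v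
  have mem₁ : inl a₁ ∈ insert (inr 0 : V ⊕ Fin 4) (inl '' W₁) := Or.inr ⟨a₁, ha₁, rfl⟩
  have mem₂ : inl a₂ ∈ insert (inr 2 : V ⊕ Fin 4) (inl '' W₂) := Or.inr ⟨a₂, ha₂, rfl⟩
  refine ecc_le_iff.2 fun y => ?_
  rcases y with u | i
  · obtain ⟨b, hb, hub⟩ : ∃ b ∈ W₁, G′.dist (inl u) (inl b) ≤ 1 :=
      exists_mem_dist_inl_le_one hW₁.2 u
    exact hconn.dist_le_three_of_isClique hK₁ mem₁ (Or.inr ⟨b, hb, rfl⟩) hva₁ (dist_comm ▸ hub)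
  · fin_cases i
    · exact hconn.dist_le_three_of_isClique hK₁ mem₁ (Set.mem_insert _ _) hva₁ (by simp)
    · exact hconn.dist_le_three_of_isClique hK₁ mem₁ (Set.mem_insert _ _) hva₁
        (dist_eq_one_iff_adj.2 (by simp)).le
    · exact hconn.dist_le_three_of_isClique hK₂ mem₂ (Set.mem_insert _ _) hva₂ (by simp)
    · exact hconn.dist_le_three_of_isClique hK₂ mem₂ (Set.mem_insert _ _) hva₂
        (dist_eq_one_iff_adj.2 (by simp)).le

lemma ecc_inr_le [Nonempty V] (hconn : G′.Connected) (hW₁ : G.IsDominatingClique W₁)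
    (hW₂ : G.IsDominatingClique W₂) (i : Fin 4) : ecc G′ (inr i) ≤ ![4, 5, 4, 5] i := by
  obtain ⟨a₁, ha₁⟩ := hW₁.nonempty
  obtain ⟨a₂, ha₂⟩ := hW₂.nonempty
  have h0 : ecc G′ (inr 0) ≤ 4 :=
    ((show G′.Adj (inr 0) (inl a₁) by simpa).ecc_le_ecc_add_one hconn).trans
      (by linarith [ecc_inl_le hconn hW₁ hW₂ a₁])
  have h2 : ecc G′ (inr 2) ≤ 4 :=
    ((show G′.Adj (inr 2) (inl a₂) by simpa).ecc_le_ecc_add_one hconn).trans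
      (by linarith [ecc_inl_le hconn hW₁ hW₂ a₂])
  fin_cases i
  · exact h0
  · exact ((show G′.Adj (inr 1) (inr 0) by simp).ecc_le_ecc_add_one hconn).trans (by simp; omega)
  · exact h2
  · exact ((show G′.Adj (inr 3) (inr 2) by simp).ecc_le_ecc_add_one hconn).trans (by simp; omega)

lemma ecc_inl (hconn : G′.Connected) (hdisj : Disjoint W₁ W₂) (hW₁ : G.IsDominatingClique W₁)
    (hW₂ : G.IsDominatingClique W₂) (v : V) : ecc G′ (inl v) = 3 := by
  refine le_antisymm (ecc_inl_le hconn hW₁ hW₂ v) ((le_of_eq ?_).trans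
    (max_potential_le_ecc hconn hdisj _))
  simp only [potential, elim_inl]
  split_ifs <;> rfl

lemma ecc_inr [Nonempty V] (hconn : G′.Connected) (hdisj : Disjoint W₁ W₂)
    (hW₁ : G.IsDominatingClique W₁) (hW₂ : G.IsDominatingClique W₂) (i : Fin 4) :
    ecc G′ (inr i) = ![4, 5, 4, 5] i := by
  refine le_antisymm (ecc_inr_le hconn hW₁ hW₂ i) ((le_of_eq ?_).trans
    (max_potential_le_ecc hconn hdisj _))
  fin_cases i <;> rfl

end AddTwoPendCliques

theorem addTwoPendCliques_center_general [Fintype V] (G : SimpleGraph V) (hG : G.Connected)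
    (hch : KChordal G 3) (W₁ W₂ : Set V) (hdisj : Disjoint W₁ W₂)
    (h1 : G.IsClique W₁) (h2 : G.IsClique W₂)
    (hdom1 : ∀ v ∉ W₁, ∃ w ∈ W₁, G.Adj v w) (hdom2 : ∀ v ∉ W₂, ∃ w ∈ W₂, G.Adj v w) :
    KChordal (addTwoPendCliques G W₁ W₂) 3 ∧ grad (addTwoPendCliques G W₁ W₂) = 3 ∧
      gdiam (addTwoPendCliques G W₁ W₂) = 5 ∧
      _root_.center (addTwoPendCliques G W₁ W₂) = Set.range Sum.inl := by
  have hW₁ : G.IsDominatingClique W₁ := ⟨h1, hdom1⟩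
  have hW₂ : G.IsDominatingClique W₂ := ⟨h2, hdom2⟩
  have : Nonempty V := hG.nonempty
  have hconn := hG.addTwoPendCliques hW₁.nonempty hW₂.nonempty
  have hl := ecc_inl hconn hdisj hW₁ hW₂
  have hr := ecc_inr hconn hdisj hW₁ hW₂
  have hgrad : grad (addTwoPendCliques G W₁ W₂) = 3 := by
    refine grad_eq_of_isLeast ⟨⟨inl (Classical.arbitrary V), hl _⟩, ?_⟩
    rintro _ ⟨v | i, rfl⟩
    · simp [hl]
    · fin_cases i <;> simp [hr]
  refine ⟨kChordal_addTwoPendCliques hch h1 h2, hgrad,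
    gdiam_eq_of_isGreatest ⟨⟨inr 1, hr 1⟩, ?_⟩, ?_⟩
  · rintro _ ⟨v | i, rfl⟩
    · simp [hl]
    · fin_cases i <;> simp [hr]
  · ext (v | i)
    · simp [_root_.center, hgrad, hl]
    · fin_cases i <;> simp [_root_.center, hgrad, hr]

theorem addTwoPendCliques_center [Fintype V] (G : SimpleGraph V) (hG : G.Connected)
    (hch : KChordal G 3) (hd : gdiam G ≤ 3) (W₁ W₂ : Set V) (hdisj : Disjoint W₁ W₂)
    (h1 : G.IsClique W₁) (h2 : G.IsClique W₂)
    (hdom1 : ∀ v ∉ W₁, ∃ w ∈ W₁, G.Adj v w) (hdom2 : ∀ v ∉ W₂, ∃ w ∈ W₂, G.Adj v w) :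
    KChordal (addTwoPendCliques G W₁ W₂) 3 ∧ grad (addTwoPendCliques G W₁ W₂) = 3 ∧
      gdiam (addTwoPendCliques G W₁ W₂) = 5 ∧
      _root_.center (addTwoPendCliques G W₁ W₂) = Set.range Sum.inl :=
  addTwoPendCliques_center_general G hG hch W₁ W₂ hdisj h1 h2 hdom1 hdom2
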